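/- Let x be a vertex of P_SEP(n). Then the support graph of x has at most 2n − 3 edges, i.e., |E_x| ≤ 2n − 3. -/

import Mathlib

open Finset

/-- Membership in the subtour-elimination polytope `P_SEP(n)`.
A point is encoded as a symmetric matrix with zero diagonal; the entry `x i j`
is the value on the (undirected) edge `ij` of the complete graph `K_n`. -/
def InPSEP (n : ℕ) (x : Fin n → Fin n → ℝ) : Prop :=
  (∀ i j, x i j = x j i) ∧ (∀ i, x i i = 0) ∧
  (∀ v, (∑ j, x v j) = 2) ∧
  (∀ S : Finset (Fin n), 3 ≤ S.card → S.card + 3 ≤ n →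
    2 ≤ ∑ i ∈ S, ∑ j ∈ Sᶜ, x i j) ∧
  (∀ i j, 0 ≤ x i j ∧ x i j ≤ 1)

/-- The subtour-elimination polytope, as a set. -/
def PSEP (n : ℕ) : Set (Fin n → Fin n → ℝ) := {x | InPSEP n x}

/-- `x` is a vertex (extreme point) of `P_SEP(n)`. -/
def IsVertex (n : ℕ) (x : Fin n → Fin n → ℝ) : Prop :=
  x ∈ (PSEP n).extremePoints ℝ

/-- A metric cost vector on `K_n`: symmetric, zero diagonal, nonnegative,
satisfying the triangle inequality. -/
def IsMetric (n : ℕ) (c : Fin n → Fin n → ℝ) : Prop :=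
  (∀ i j, c i j = c j i) ∧ (∀ i, c i i = 0) ∧ (∀ i j, 0 ≤ c i j) ∧
  (∀ i j k, i ≠ j → j ≠ k → i ≠ k → c i j ≤ c i k + c k j)

/-- The "dot product" `c · x` over the edges of `K_n` (each undirected edge
counted once, whence the division by `2`). -/
noncomputable def dotE (n : ℕ) (c x : Fin n → Fin n → ℝ) : ℝ :=
  (∑ i, ∑ j, c i j * x i j) / 2

/-- The cost of the Hamiltonian tour that visits the nodes in the cyclic order
`σ 0, σ 1, …, σ (n-1), σ 0`. -/
noncomputable def tourCost (n : ℕ) (c : Fin n → Fin n → ℝ) (σ : Equiv.Perm (Fin n)) : ℝ :=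
  ∑ i, c (σ i) (σ (finRotate n i))

/-- `TSP(c)`: minimum cost of a Hamiltonian tour. -/
noncomputable def TSP (n : ℕ) (c : Fin n → Fin n → ℝ) : ℝ :=
  sInf {r | ∃ σ : Equiv.Perm (Fin n), r = tourCost n c σ}

/-- `SEP(c)`: optimal value of the subtour-elimination relaxation. -/
noncomputable def SEP (n : ℕ) (c : Fin n → Fin n → ℝ) : ℝ :=
  sInf {r | ∃ x, InPSEP n x ∧ r = dotE n c x}

/-- `Gap(x)`: the supremum of `TSP(c)/SEP(c)` over metric costs `c` with
`SEP(c) > 0` for which `x` is an optimal solution of `SEP(c)`. -/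
noncomputable def Gap (n : ℕ) (x : Fin n → Fin n → ℝ) : ℝ :=
  sSup {r | ∃ c, IsMetric n c ∧ 0 < SEP n c ∧ dotE n c x = SEP n c ∧
    r = TSP n c / SEP n c}

/-- `Gap⁺(x)`: the supremum of `TSP(c)/(c·x)` over metric costs `c` with `c·x > 0`. -/
noncomputable def GapPlus (n : ℕ) (x : Fin n → Fin n → ℝ) : ℝ :=
  sSup {r | ∃ c, IsMetric n c ∧ 0 < dotE n c x ∧ r = TSP n c / dotE n c x}

open Classical in
/-- The number of edges of the support graph `G_x` (non-zero components of `x`). -/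
noncomputable def supportSize (n : ℕ) (x : Fin n → Fin n → ℝ) : ℕ :=
  (Finset.univ.filter fun p : Fin n × Fin n => p.1 < p.2 ∧ x p.1 p.2 ≠ 0).card

open Classical in
/-- The degree of the node `v` in the support graph `G_x`. -/
noncomputable def suppDegree (n : ℕ) (x : Fin n → Fin n → ℝ) (v : Fin n) : ℕ :=
  (Finset.univ.filter fun j : Fin n => j ≠ v ∧ x v j ≠ 0).card

/-- `x` is fractional: some edge has value not in `{0,1}`. -/
def IsFracPoint (n : ℕ) (x : Fin n → Fin n → ℝ) : Prop :=
  ∃ i j, i ≠ j ∧ x i j ≠ 0 ∧ x i j ≠ 1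

/-- The BB-move `BB(x, ab)`: a new node `w = Fin.last n` is added, the edge `ab`
is set to `0`, the edges `aw, wb` are set to `1`, all other edges at `w` are `0`,
and the remaining entries are copied from `x`. -/
noncomputable def BB {n : ℕ} (x : Fin n → Fin n → ℝ) (a b : Fin n)
    (i j : Fin (n + 1)) : ℝ :=
  if hi : i = Fin.last n then
    (if j = Fin.castSucc a ∨ j = Fin.castSucc b then 1 else 0)
  else if hj : j = Fin.last n then
    (if i = Fin.castSucc a ∨ i = Fin.castSucc b then 1 else 0)
  else if (i = Fin.castSucc a ∧ j = Fin.castSucc b) ∨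
          (i = Fin.castSucc b ∧ j = Fin.castSucc a) then 0
  else x (i.castPred hi) (j.castPred hj)

/-- `IsSuccessor x y`: `y` is obtained from `x` by a finite (possibly empty)
sequence of BB-moves, each applied on a `1`-edge. -/
inductive IsSuccessor : {n m : ℕ} → (Fin n → Fin n → ℝ) → (Fin m → Fin m → ℝ) → Prop
  | refl {n : ℕ} (x : Fin n → Fin n → ℝ) : IsSuccessor x x
  | step {n m : ℕ} (x : Fin n → Fin n → ℝ) (y : Fin m → Fin m → ℝ) (a b : Fin m) :
      IsSuccessor x y → a ≠ b → y a b = 1 → IsSuccessor x (BB y a b)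

/-- The consecutive pairs of a cyclic sequence of nodes (including the
wrap-around pair). -/
def cyclicPairs {n : ℕ} (p : List (Fin n)) : List (Fin n × Fin n) :=
  p.zip (p.rotate 1)

/-- The multiplicity with which the closed walk `p` traverses the undirected
edge `ij`. -/
def multE {n : ℕ} (p : List (Fin n)) (i j : Fin n) : ℕ :=
  (cyclicPairs p).countP fun q =>
    decide ((q.1 = i ∧ q.2 = j) ∨ (q.1 = j ∧ q.2 = i))

/-- `p` is a Hamiltonian walk on the graph with adjacency relation `A`:
a nonempty closed walk visiting every node at least once, using only edges of
the graph, and traversing every edge at most twice. -/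
def IsHamWalk {n : ℕ} (A : Fin n → Fin n → Prop) (p : List (Fin n)) : Prop :=
  p ≠ [] ∧ (∀ v : Fin n, v ∈ p) ∧ (∀ q ∈ cyclicPairs p, A q.1 q.2) ∧
  (∀ i j : Fin n, multE p i j ≤ 2)

/-- Admissibility of the `λ` variables of the LPs `DOPT⁺` and `DOPTI`:
nonnegative, symmetric in the first two (edge) indices, and supported on
genuine triples. -/
def LamOK (n : ℕ) (lam : Fin n → Fin n → Fin n → ℝ) : Prop :=
  (∀ i j k, 0 ≤ lam i j k) ∧ (∀ i j k, lam i j k = lam j i k) ∧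
  (∀ i j k, i = j ∨ k = i ∨ k = j → lam i j k = 0)

/-- The term `∑_{k ≠ i,j} (−λ_{ijk} + λ_{ikj} + λ_{jki})` of the LP constraints. -/
noncomputable def lamTerm (n : ℕ) (lam : Fin n → Fin n → Fin n → ℝ) (i j : Fin n) : ℝ :=
  ∑ k ∈ ({i, j} : Finset (Fin n))ᶜ, (-lam i j k + lam i k j + lam j k i)

/-- The characteristic vector `t_{ij}` of the tour `σ` on the edge `ij`. -/
def tourMult (n : ℕ) (σ : Equiv.Perm (Fin n)) (i j : Fin n) : ℕ :=
  (Finset.univ.filter fun k : Fin n =>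
    (σ k = i ∧ σ (finRotate n k) = j) ∨ (σ k = j ∧ σ (finRotate n k) = i)).card

/-- Feasibility for the LP `DOPT⁺(x)`. -/
def DOPTplusFeasible (n : ℕ) (x : Fin n → Fin n → ℝ)
    (lam : Fin n → Fin n → Fin n → ℝ) (μ : Equiv.Perm (Fin n) → ℝ) : Prop :=
  LamOK n lam ∧ (∀ σ, 0 ≤ μ σ) ∧
  (∀ i j, i ≠ j →
    lamTerm n lam i j + ∑ σ : Equiv.Perm (Fin n), (tourMult n σ i j : ℝ) * μ σ ≤ x i j)

/-- The optimal value of the LP `DOPT⁺(x)`. -/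
noncomputable def DOPTplus (n : ℕ) (x : Fin n → Fin n → ℝ) : ℝ :=
  sSup {r | ∃ lam μ, DOPTplusFeasible n x lam μ ∧ r = ∑ σ : Equiv.Perm (Fin n), μ σ}

/-- Feasibility for the LP `DOPTI(x)`: `μ` is a finitely supported nonnegative
assignment on Hamiltonian walks of `K_n`. -/
def DOPTIFeasible (n : ℕ) (x : Fin n → Fin n → ℝ)
    (lam : Fin n → Fin n → Fin n → ℝ) (μ : List (Fin n) →₀ ℝ) : Prop :=
  LamOK n lam ∧ (∀ p, 0 ≤ μ p) ∧
  (∀ p ∈ μ.support, IsHamWalk (fun i j : Fin n => i ≠ j) p) ∧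
  (∀ i j, i ≠ j →
    lamTerm n lam i j + ∑ p ∈ μ.support, (multE p i j : ℝ) * μ p ≤ x i j)

/-- The optimal value of the LP `DOPTI(x)`. -/
noncomputable def DOPTI (n : ℕ) (x : Fin n → Fin n → ℝ) : ℝ :=
  sSup {r | ∃ lam μ, DOPTIFeasible n x lam μ ∧ r = ∑ p ∈ μ.support, μ p}

/-- Feasibility for the LP `DOPTII(x)`: `μ` is a finitely supported nonnegative
assignment on Hamiltonian walks of the support graph `G_x`, satisfying the
edge constraints on `E_x`. -/
def DOPTIIFeasible (n : ℕ) (x : Fin n → Fin n → ℝ) (μ : List (Fin n) →₀ ℝ) : Prop :=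
  (∀ p, 0 ≤ μ p) ∧
  (∀ p ∈ μ.support, IsHamWalk (fun i j : Fin n => i ≠ j ∧ 0 < x i j) p) ∧
  (∀ i j, i ≠ j → 0 < x i j →
    ∑ p ∈ μ.support, (multE p i j : ℝ) * μ p ≤ x i j)

/-- The optimal value of the LP `DOPTII(x)`. -/
noncomputable def DOPTII (n : ℕ) (x : Fin n → Fin n → ℝ) : ℝ :=
  sSup {r | ∃ μ, DOPTIIFeasible n x μ ∧ r = ∑ p ∈ μ.support, μ p}

/-- The constant `C(x, ab) = 2∑_{w_{ab}=0} μ_w + ∑_{w_{ab}=1} μ_w + 2∑_{w_{ab}=2} μ_w`. -/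
noncomputable def Cconst {n : ℕ} (μ : List (Fin n) →₀ ℝ) (a b : Fin n) : ℝ :=
  2 * ∑ p ∈ μ.support.filter (fun p => multE p a b = 0), μ p
    + ∑ p ∈ μ.support.filter (fun p => multE p a b = 1), μ p
    + 2 * ∑ p ∈ μ.support.filter (fun p => multE p a b = 2), μ p

/-- The constant `C*(x) = max over 1-edges e of x of C(x, e)`. -/
noncomputable def Cstar {n : ℕ} (x : Fin n → Fin n → ℝ) (μ : List (Fin n) →₀ ℝ) : ℝ :=
  sSup {r | ∃ a b : Fin n, a ≠ b ∧ x a b = 1 ∧ r = Cconst μ a b}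

/-- The node from which the `(d+1)`-st BB-move expands the current `1`-path:
for `d = 0` it is `a` itself, afterwards it is the last inserted node. -/
def aNode {n : ℕ} (a : Fin n) : (d : ℕ) → Fin (n + d)
  | 0 => a
  | d + 1 => Fin.last (n + d)

/-- `d` consecutive BB-moves expanding the `1`-edge `ab` into a `1`-path
with `d` internal nodes. -/
noncomputable def BBiter {n : ℕ} (x : Fin n → Fin n → ℝ) (a b : Fin n) :
    (d : ℕ) → Fin (n + d) → Fin (n + d) → ℝ
  | 0 => x
  | d + 1 => BB (BBiter x a b d) (aNode a d) (Fin.castLE (Nat.le_add_right n d) b)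

/-- Extension of the cost `c` on `K_n` to `K_{n+1}` by adding a new node
`w = Fin.last n` at distance `0` from `b`. -/
noncomputable def extendCost {n : ℕ} (c : Fin n → Fin n → ℝ) (b : Fin n)
    (i j : Fin (n + 1)) : ℝ :=
  if hi : i = Fin.last n then
    (if hj : j = Fin.last n then 0 else c (j.castPred hj) b)
  else if hj : j = Fin.last n then c (i.castPred hi) b
  else c (i.castPred hi) (j.castPred hj)

/-- The cost of a (not necessarily closed) path, given as the list of its nodes. -/
noncomputable def pathCost {n : ℕ} (c : Fin n → Fin n → ℝ) (p : List (Fin n)) : ℝ :=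
  ((p.zip p.tail).map fun q => c q.1 q.2).sum

/-- `p` is a path from `i` to `j` in the graph with adjacency relation `A`. -/
def IsPathIn {n : ℕ} (A : Fin n → Fin n → Prop) (i j : Fin n) (p : List (Fin n)) : Prop :=
  p.head? = some i ∧ p.getLast? = some j ∧ List.Chain' (fun u v => A u v) p

open Classical in
/-- The metric completion of the restriction of `c` to the graph with adjacency
relation `A`: on edges of the graph it is `c`, elsewhere it is the cost of a
shortest path in the graph. -/
noncomputable def metricCompletion (n : ℕ) (A : Fin n → Fin n → Prop)
    (c : Fin n → Fin n → ℝ) (i j : Fin n) : ℝ :=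
  if A i j then c i j else sInf {r | ∃ p, IsPathIn A i j p ∧ r = pathCost c p}

/-- A (nonempty, injective) chain of `1`-edges of `x`. -/
def IsOneChain {n : ℕ} (x : Fin n → Fin n → ℝ) (p : List (Fin n)) : Prop :=
  2 ≤ p.length ∧ p.Nodup ∧ List.Chain' (fun i j => x i j = 1) p

/-- A `1`-path of `x`: a maximal path of `1`-edges in the support graph. -/
def IsMaxOnePath {n : ℕ} (x : Fin n → Fin n → ℝ) (p : List (Fin n)) : Prop :=
  IsOneChain x p ∧ (∀ v, ¬ IsOneChain x (v :: p)) ∧ (∀ v, ¬ IsOneChain x (p ++ [v]))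

namespace SEP18
variable {n : ℕ}

/-- cut value of a set -/
noncomputable def cutSum (x : Fin n → Fin n → ℝ) (S : Finset (Fin n)) : ℝ :=
  ∑ i ∈ S, ∑ j ∈ Sᶜ, x i j

lemma sum_over_eq_ite {α M : Type*} [Fintype α] [DecidableEq α] [AddCommMonoid M] (S : Finset α) (f : α → M) :
    ∑ j ∈ S, f j = ∑ j, if j ∈ S then f j else 0 := by
  rw [Finset.sum_ite_mem, Finset.univ_inter]

lemma cutSum_eq_double (x : Fin n → Fin n → ℝ) (S : Finset (Fin n)) :
    cutSum x S = ∑ i, ∑ j, if i ∈ S ∧ j ∉ S then x i j else 0 := by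
  unfold cutSum
  rw [sum_over_eq_ite S]
  refine Finset.sum_congr rfl fun i _ => ?_
  by_cases hi : i ∈ S
  · simp only [hi, if_true, true_and]
    rw [sum_over_eq_ite Sᶜ]
    refine Finset.sum_congr rfl fun j _ => ?_
    simp [Finset.mem_compl]
  · simp [hi]

lemma cutSum_compl (x : Fin n → Fin n → ℝ) (hsymm : ∀ i j, x i j = x j i)
    (S : Finset (Fin n)) : cutSum x Sᶜ = cutSum x S := by
  unfold cutSum
  rw [compl_compl, Finset.sum_comm]
  refine Finset.sum_congr rfl fun i _ => Finset.sum_congr rfl fun j _ => hsymm j i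

lemma cutSum_singleton (x : Fin n → Fin n → ℝ) (hdiag : ∀ i, x i i = 0)
    (hdeg : ∀ v, (∑ j, x v j) = 2) (v : Fin n) : cutSum x {v} = 2 := by
  unfold cutSum
  rw [Finset.sum_singleton]
  have : ∑ j ∈ ({v} : Finset (Fin n))ᶜ, x v j = (∑ j, x v j) - x v v := by
    rw [eq_sub_iff_add_eq]
    rw [← Finset.sum_compl_add_sum ({v} : Finset (Fin n)) (x v)]
    simp
  rw [this, hdiag, hdeg]; ring

lemma cutSum_pair (x : Fin n → Fin n → ℝ) (hsymm : ∀ i j, x i j = x j i)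
    (hdiag : ∀ i, x i i = 0) (hdeg : ∀ v, (∑ j, x v j) = 2) {u v : Fin n} (huv : u ≠ v) :
    cutSum x {u, v} = 4 - 2 * x u v := by
  unfold cutSum
  rw [Finset.sum_insert (by simp [huv]), Finset.sum_singleton]
  have key : ∀ w z : Fin n, w ≠ z →
      ∑ j ∈ ({w, z} : Finset (Fin n))ᶜ, x w j = 2 - x w z := by
    intro w z hwz
    have : ∑ j ∈ ({w, z} : Finset (Fin n)), x w j = x w w + x w z := by
      rw [Finset.sum_insert (by simp [hwz]), Finset.sum_singleton]
    have h2 := Finset.sum_compl_add_sum ({w, z} : Finset (Fin n)) (x w)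
    rw [this, hdeg, hdiag] at h2
    linarith
  have h1 := key u v huv
  have h2' : ({v, u} : Finset (Fin n)) = {u, v} := by
    ext a; simp [or_comm]
  have h2 := key v u huv.symm
  rw [h2'] at h2
  rw [h1, h2, hsymm v u]; ring

lemma cutSum_ge_two (x : Fin n → Fin n → ℝ) (hx : InPSEP n x)
    {S : Finset (Fin n)} (hne : S.Nonempty) (hproper : S ≠ Finset.univ) :
    2 ≤ cutSum x S := by
  obtain ⟨hsymm, hdiag, hdeg, hsub, hbnd⟩ := hx
  -- helper for card ≤ 2
  have small : ∀ T : Finset (Fin n), T.Nonempty → T.card ≤ 2 → 2 ≤ cutSum x T := by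
    intro T hTne hT2
    interval_cases h : T.card
    · simp [Finset.card_eq_zero] at h; simp [h] at hTne
    · obtain ⟨v, hv⟩ := Finset.card_eq_one.mp h
      rw [hv, cutSum_singleton x hdiag hdeg]
    · obtain ⟨u, v, huv, huvT⟩ := Finset.card_eq_two.mp h
      rw [huvT, cutSum_pair x hsymm hdiag hdeg huv]
      have := (hbnd u v).2
      linarith
  by_cases hc : S.card ≤ 2
  · exact small S hne hc
  by_cases hc2 : S.card + 3 ≤ n
  · exact hsub S (by omega) hc2
  · -- complement is small
    have hcompl : Sᶜ.card ≤ 2 := by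
      have h1 : S.card + Sᶜ.card = n := by
        rw [Finset.card_add_card_compl]; simp
      omega
    have hcne : Sᶜ.Nonempty := by
      rw [← Finset.card_pos]
      have : S.card < n := by
        have := Finset.card_lt_card (lt_of_le_of_ne (Finset.subset_univ S) hproper)
        simpa using this
      have h1 : S.card + Sᶜ.card = n := by
        rw [Finset.card_add_card_compl]; simp
      omega
    rw [← cutSum_compl x hsymm]
    exact small Sᶜ hcne hcompl

end SEP18

namespace SEP18
variable {n : ℕ}

/-- sum of x over ordered pairs in A × B -/
noncomputable def pairSum (x : Fin n → Fin n → ℝ) (A B : Finset (Fin n)) : ℝ :=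
  ∑ i ∈ A, ∑ j ∈ B, x i j

lemma pairSum_eq_double (x : Fin n → Fin n → ℝ) (A B : Finset (Fin n)) :
    pairSum x A B = ∑ i, ∑ j, if i ∈ A ∧ j ∈ B then x i j else 0 := by
  unfold pairSum
  rw [sum_over_eq_ite A]
  refine Finset.sum_congr rfl fun i _ => ?_
  by_cases hi : i ∈ A
  · simp only [hi, if_true, true_and]
    rw [sum_over_eq_ite B]
  · simp [hi]

lemma pairSum_nonneg (x : Fin n → Fin n → ℝ) (hge : ∀ i j, 0 ≤ x i j)
    (A B : Finset (Fin n)) : 0 ≤ pairSum x A B :=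
  Finset.sum_nonneg fun i _ => Finset.sum_nonneg fun j _ => hge i j

lemma cutSum_submod (x : Fin n → Fin n → ℝ) (S T : Finset (Fin n)) :
    cutSum x S + cutSum x T = cutSum x (S ∩ T) + cutSum x (S ∪ T)
      + (pairSum x (S \ T) (T \ S) + pairSum x (T \ S) (S \ T)) := by
  rw [cutSum_eq_double, cutSum_eq_double, cutSum_eq_double, cutSum_eq_double,
    pairSum_eq_double, pairSum_eq_double]
  simp only [← Finset.sum_add_distrib]
  refine Finset.sum_congr rfl fun i _ => Finset.sum_congr rfl fun j _ => ?_
  by_cases hiS : i ∈ S <;> by_cases hiT : i ∈ T <;> by_cases hjS : j ∈ S <;>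
    by_cases hjT : j ∈ T <;>
    simp [hiS, hiT, hjS, hjT, Finset.mem_inter, Finset.mem_union, Finset.mem_sdiff]

/-- Tight set predicate -/
def IsTight (x : Fin n → Fin n → ℝ) (S : Finset (Fin n)) : Prop :=
  S.Nonempty ∧ S ≠ Finset.univ ∧ cutSum x S = 2

lemma uncross (x : Fin n → Fin n → ℝ) (hx : InPSEP n x) {S T : Finset (Fin n)}
    (hS : IsTight x S) (hT : IsTight x T)
    (hint : (S ∩ T).Nonempty) (hun : S ∪ T ≠ Finset.univ) :
    IsTight x (S ∩ T) ∧ IsTight x (S ∪ T) ∧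
      (∀ i ∈ S \ T, ∀ j ∈ T \ S, x i j = 0) ∧ (∀ i ∈ T \ S, ∀ j ∈ S \ T, x i j = 0) := by
  have hge : ∀ i j, 0 ≤ x i j := fun i j => (hx.2.2.2.2 i j).1
  have hsub := cutSum_submod x S T
  have h1 : 2 ≤ cutSum x (S ∩ T) := cutSum_ge_two x hx hint
    (fun h => hun (Finset.eq_univ_iff_forall.mpr fun a => by
      have := Finset.eq_univ_iff_forall.mp h a
      exact Finset.mem_union_left _ (Finset.mem_inter.mp this).1))
  have h2 : 2 ≤ cutSum x (S ∪ T) := cutSum_ge_two x hx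
    (hS.1.mono Finset.subset_union_left) hun
  have p1 : 0 ≤ pairSum x (S \ T) (T \ S) := pairSum_nonneg x hge _ _
  have p2 : 0 ≤ pairSum x (T \ S) (S \ T) := pairSum_nonneg x hge _ _
  rw [hS.2.2, hT.2.2] at hsub
  have e1 : cutSum x (S ∩ T) = 2 := by linarith
  have e2 : cutSum x (S ∪ T) = 2 := by linarith
  have e3 : pairSum x (S \ T) (T \ S) = 0 := by linarith
  have e4 : pairSum x (T \ S) (S \ T) = 0 := by linarith
  have zero_of : ∀ A B : Finset (Fin n), pairSum x A B = 0 → ∀ i ∈ A, ∀ j ∈ B, x i j = 0 := by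
    intro A B hAB i hi j hj
    have h3 : ∀ i ∈ A, (∑ j ∈ B, x i j) = 0 := by
      have := (Finset.sum_eq_zero_iff_of_nonneg
        (fun i _ => Finset.sum_nonneg fun j _ => hge i j)).mp hAB
      exact this
    have := (Finset.sum_eq_zero_iff_of_nonneg (fun j _ => hge i j)).mp (h3 i hi)
    exact this j hj
  refine ⟨⟨hint, ?_, e1⟩, ⟨hS.1.mono Finset.subset_union_left, hun, e2⟩,
    zero_of _ _ e3, zero_of _ _ e4⟩
  intro h
  exact hS.2.1 (Finset.eq_univ_iff_forall.mpr fun a =>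
    (Finset.mem_inter.mp (Finset.eq_univ_iff_forall.mp h a)).1)

end SEP18

namespace SEP18
variable {n : ℕ}

open Classical in
/-- The support edge set. -/
noncomputable def Ex (n : ℕ) (x : Fin n → Fin n → ℝ) : Finset (Fin n × Fin n) :=
  Finset.univ.filter fun p : Fin n × Fin n => p.1 < p.2 ∧ x p.1 p.2 ≠ 0

open Classical in
lemma mem_Ex {x : Fin n → Fin n → ℝ} {p : Fin n × Fin n} :
    p ∈ Ex n x ↔ p.1 < p.2 ∧ x p.1 p.2 ≠ 0 := by
  simp [Ex]

/-- Ambient space for cut vectors. -/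
abbrev Vsp (n : ℕ) (x : Fin n → Fin n → ℝ) := EuclideanSpace ℝ (Ex n x)

open Classical in
/-- The crossing indicator vector of a set `S`, on support edges. -/
noncomputable def cutVec (x : Fin n → Fin n → ℝ) (S : Finset (Fin n)) : Vsp n x :=
  WithLp.toLp 2 fun e => (if (e : Fin n × Fin n).1 ∈ S ∧ (e : Fin n × Fin n).2 ∉ S then (1:ℝ) else 0)
    + (if (e : Fin n × Fin n).2 ∈ S ∧ (e : Fin n × Fin n).1 ∉ S then (1:ℝ) else 0)

lemma cutVec_compl (x : Fin n → Fin n → ℝ) (S : Finset (Fin n)) :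
    cutVec x Sᶜ = cutVec x S := by
  refine PiLp.ext fun e => ?_
  simp only [cutVec, WithLp.ofLp_toLp, Finset.mem_compl, not_not, and_comm]
  rw [add_comm]

lemma cutVec_nonneg (x : Fin n → Fin n → ℝ) (S : Finset (Fin n)) (e : Ex n x) :
    0 ≤ cutVec x S e := by
  unfold cutVec
  simp only [WithLp.ofLp_toLp]
  positivity

lemma cutVec_le_one (x : Fin n → Fin n → ℝ) (S : Finset (Fin n)) (e : Ex n x) :
    cutVec x S e ≤ 1 := by
  unfold cutVec
  by_cases h1 : (e : Fin n × Fin n).1 ∈ S <;> by_cases h2 : (e : Fin n × Fin n).2 ∈ S <;>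
    simp [h1, h2]

open Classical in
/-- Extension of `d : Ex → ℝ` to a symmetric matrix supported on `Ex`. -/
noncomputable def dmat (x : Fin n → Fin n → ℝ) (d : Ex n x → ℝ) : Fin n → Fin n → ℝ :=
  fun i j => ∑ e ∈ (Ex n x).attach,
    (if (i, j) = (e : Fin n × Fin n) ∨ (j, i) = (e : Fin n × Fin n) then d e else 0)

lemma dmat_symm (x : Fin n → Fin n → ℝ) (d : Ex n x → ℝ) (i j : Fin n) :
    dmat x d i j = dmat x d j i := by
  unfold dmat
  refine Finset.sum_congr rfl fun e _ => ?_
  congr 1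
  ext
  rw [or_comm]

lemma dmat_diag (x : Fin n → Fin n → ℝ) (d : Ex n x → ℝ) (i : Fin n) :
    dmat x d i i = 0 := by
  unfold dmat
  refine Finset.sum_eq_zero fun e _ => ?_
  have he := (mem_Ex.mp e.2).1
  rw [if_neg]
  rintro (h | h) <;>
  · rw [← h] at he
    exact absurd he (lt_irrefl i)

lemma dmat_apply_mem (x : Fin n → Fin n → ℝ) (d : Ex n x → ℝ) {i j : Fin n}
    (h : (i, j) ∈ Ex n x) : dmat x d i j = d ⟨(i, j), h⟩ := by
  unfold dmat
  rw [Finset.sum_eq_single (⟨(i, j), h⟩ : Ex n x)]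
  · rw [if_pos (Or.inl rfl)]
  · intro e _ hne
    rw [if_neg]
    rintro (heq | heq)
    · exact hne (Subtype.ext heq.symm)
    · have h1 := (mem_Ex.mp h).1
      have h2 := (mem_Ex.mp e.2).1
      rw [← heq] at h2
      exact absurd h1 (by simpa using le_of_lt h2)
  · intro hmem
    exact absurd (Finset.mem_attach _ _) hmem

lemma dmat_apply_zero (x : Fin n → Fin n → ℝ) (d : Ex n x → ℝ) {i j : Fin n}
    (h1 : (i, j) ∉ Ex n x) (h2 : (j, i) ∉ Ex n x) : dmat x d i j = 0 := by
  unfold dmat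
  refine Finset.sum_eq_zero fun e _ => ?_
  rw [if_neg]
  rintro (heq | heq)
  · exact h1 (heq ▸ e.2)
  · exact h2 (heq ▸ e.2)

lemma abs_dmat_le (x : Fin n → Fin n → ℝ) (d : Ex n x → ℝ) (i j : Fin n) :
    |dmat x d i j| ≤ ∑ e ∈ (Ex n x).attach, |d e| := by
  unfold dmat
  refine (Finset.abs_sum_le_sum_abs _ _).trans (Finset.sum_le_sum fun e _ => ?_)
  split
  · exact le_refl _
  · rw [abs_zero]; positivity

end SEP18

namespace SEP18
variable {n : ℕ}

open Classical in
lemma ite_or_split {P Q : Prop} [Decidable P] [Decidable Q] (h : ¬(P ∧ Q)) (c : ℝ) :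
    (if P ∨ Q then c else 0) = (if P then c else 0) + (if Q then c else 0) := by
  by_cases hP : P <;> by_cases hQ : Q <;> simp [hP, hQ]
  exact absurd ⟨hP, hQ⟩ h

open Classical in
lemma sum_sum_ite_pair (S : Finset (Fin n)) (a b : Fin n) (hab : a ≠ b) (c : ℝ) :
    (∑ i ∈ S, ∑ j ∈ Sᶜ, if (i, j) = (a, b) ∨ (j, i) = (a, b) then c else 0)
      = ((if a ∈ S ∧ b ∉ S then (1:ℝ) else 0) + (if b ∈ S ∧ a ∉ S then (1:ℝ) else 0)) * c := by
  have split : ∀ i j : Fin n,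
      (if (i, j) = (a, b) ∨ (j, i) = (a, b) then c else 0)
        = (if (i, j) = (a, b) then c else 0) + (if (j, i) = (a, b) then c else 0) := by
    intro i j
    refine ite_or_split ?_ c
    rintro ⟨h1, h2⟩
    rw [Prod.ext_iff] at h1 h2
    exact hab (h1.1.symm.trans h2.2)
  simp only [split, Finset.sum_add_distrib]
  have e1 : (∑ i ∈ S, ∑ j ∈ Sᶜ, if (i, j) = (a, b) then c else 0)
      = if a ∈ S ∧ b ∉ S then c else 0 := by
    rw [← Finset.sum_product']
    rw [Finset.sum_ite_eq' (S ×ˢ Sᶜ) ((a, b) : Fin n × Fin n) (fun _ => c)]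
    simp [Finset.mem_product]
  have e2 : (∑ i ∈ S, ∑ j ∈ Sᶜ, if (j, i) = (a, b) then c else 0)
      = if b ∈ S ∧ a ∉ S then c else 0 := by
    have hcond : ∀ i j : Fin n, ((j, i) = (a, b)) = ((i, j) = ((b, a) : Fin n × Fin n)) := by
      intro i j
      simp only [Prod.ext_iff, eq_iff_iff]
      tauto
    simp only [hcond]
    rw [← Finset.sum_product']
    rw [Finset.sum_ite_eq' (S ×ˢ Sᶜ) ((b, a) : Fin n × Fin n) (fun _ => c)]
    simp [Finset.mem_product]
  rw [e1, e2]
  by_cases ha : a ∈ S <;> by_cases hb : b ∈ S <;> simp [ha, hb] <;> ring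

open Classical in
lemma cutSum_dmat (x : Fin n → Fin n → ℝ) (d : Ex n x → ℝ) (S : Finset (Fin n)) :
    cutSum (dmat x d) S = ∑ e ∈ (Ex n x).attach, cutVec x S e * d e := by
  unfold cutSum dmat
  have step1 : ∀ i ∈ S, (∑ j ∈ Sᶜ, ∑ e ∈ (Ex n x).attach,
      (if (i, j) = (e : Fin n × Fin n) ∨ (j, i) = (e : Fin n × Fin n) then d e else 0))
      = ∑ e ∈ (Ex n x).attach, ∑ j ∈ Sᶜ,
      (if (i, j) = (e : Fin n × Fin n) ∨ (j, i) = (e : Fin n × Fin n) then d e else 0) := by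
    intro i _
    exact Finset.sum_comm
  rw [Finset.sum_congr rfl step1, Finset.sum_comm]
  refine Finset.sum_congr rfl fun e _ => ?_
  have hab : (e : Fin n × Fin n).1 ≠ (e : Fin n × Fin n).2 := ne_of_lt (mem_Ex.mp e.2).1
  have := sum_sum_ite_pair S (e : Fin n × Fin n).1 (e : Fin n × Fin n).2 hab (d e)
  simpa [cutVec] using this

end SEP18

namespace SEP18
variable {n : ℕ}

lemma ne_univ_of_card_lt {S : Finset (Fin n)} (h : S.card < n) : S ≠ Finset.univ := by
  intro hS
  rw [hS] at h
  simp at h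

lemma tight_singleton (x : Fin n → Fin n → ℝ) (hx : InPSEP n x) (hn : 3 ≤ n) (v : Fin n) :
    IsTight x {v} := by
  refine ⟨Finset.singleton_nonempty v, ne_univ_of_card_lt ?_, ?_⟩
  · rw [Finset.card_singleton]; omega
  · exact cutSum_singleton x hx.2.1 hx.2.2.1 v

lemma tight_pair (x : Fin n → Fin n → ℝ) (hx : InPSEP n x) (hn : 3 ≤ n) {u v : Fin n}
    (huv : u ≠ v) (h1 : x u v = 1) : IsTight x {u, v} := by
  refine ⟨Finset.insert_nonempty u {v}, ne_univ_of_card_lt ?_, ?_⟩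
  · rw [Finset.card_insert_of_notMem (by simp [huv]), Finset.card_singleton]; omega
  · rw [cutSum_pair x hx.1 hx.2.1 hx.2.2.1 huv, h1]; ring

/-- orthogonality of `d` to all tight cut vectors, in summed form. -/
def Ortho (x : Fin n → Fin n → ℝ) (d : Ex n x → ℝ) : Prop :=
  ∀ S : Finset (Fin n), IsTight x S → ∑ e ∈ (Ex n x).attach, cutVec x S e * d e = 0

open Classical in
lemma unitEdge_pointwise (x : Fin n → Fin n → ℝ) {u v : Fin n} (huv : u < v)
    (e : Ex n x) :
    cutVec x {u} e + cutVec x {v} e - cutVec x {u, v} e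
      = if (e : Fin n × Fin n) = (u, v) then 2 else 0 := by
  obtain ⟨⟨a, b⟩, he⟩ := e
  have hab : a < b := (mem_Ex.mp he).1
  have hab' : a ≠ b := ne_of_lt hab
  have huv' : u ≠ v := ne_of_lt huv
  simp only [cutVec, Finset.mem_singleton, Finset.mem_insert, Prod.ext_iff]
  by_cases hau : a = u <;> by_cases hav : a = v <;> by_cases hbu : b = u <;>
    by_cases hbv : b = v <;> subst_vars <;> simp_all <;>
    first
      | exact absurd (hab.trans huv) (lt_irrefl _)
      | exact absurd (huv.trans hab) (lt_irrefl _)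
      | norm_num

end SEP18

namespace SEP18
variable {n : ℕ}

open Classical in
lemma d_eq_zero_of_unit (x : Fin n → Fin n → ℝ) (hx : InPSEP n x) (hn : 3 ≤ n)
    {d : Ex n x → ℝ} (hd : Ortho x d) {u v : Fin n} (huv : u < v)
    (hmem : (u, v) ∈ Ex n x) (hone : x u v = 1) : d ⟨(u, v), hmem⟩ = 0 := by
  have h1 := hd {u} (tight_singleton x hx hn u)
  have h2 := hd {v} (tight_singleton x hx hn v)
  have h3 := hd {u, v} (tight_pair x hx hn (ne_of_lt huv) hone)
  have key : ∑ e ∈ (Ex n x).attach,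
      (cutVec x {u} e + cutVec x {v} e - cutVec x {u, v} e) * d e = 0 := by
    simp only [add_mul, sub_mul, Finset.sum_add_distrib, Finset.sum_sub_distrib, h1, h2, h3]
    ring
  have key2 : ∑ e ∈ (Ex n x).attach,
      (if (e : Fin n × Fin n) = (u, v) then (2:ℝ) else 0) * d e = 0 := by
    have hcg : ∑ e ∈ (Ex n x).attach,
        (if (e : Fin n × Fin n) = (u, v) then (2:ℝ) else 0) * d e
        = ∑ e ∈ (Ex n x).attach,
        (cutVec x {u} e + cutVec x {v} e - cutVec x {u, v} e) * d e :=
      Finset.sum_congr rfl fun e _ => by rw [unitEdge_pointwise x huv e]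
    rw [hcg, key]
  rw [Finset.sum_eq_single (⟨(u, v), hmem⟩ : Ex n x)] at key2
  · rw [if_pos rfl] at key2
    linarith
  · intro e _ hne
    rw [if_neg, zero_mul]
    intro heq
    exact hne (Subtype.ext heq)
  · intro hmem'
    exact absurd (Finset.mem_attach _ _) hmem'

end SEP18

namespace SEP18
variable {n : ℕ}

lemma cutSum_add_smul (x y : Fin n → Fin n → ℝ) (t : ℝ) (S : Finset (Fin n)) :
    cutSum (x + t • y) S = cutSum x S + t * cutSum y S := by
  unfold cutSum
  simp only [Pi.add_apply, Pi.smul_apply, smul_eq_mul, Finset.sum_add_distrib, Finset.mul_sum]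

open Classical in
lemma abs_cutSum_dmat_le (x : Fin n → Fin n → ℝ) (d : Ex n x → ℝ) (S : Finset (Fin n)) :
    |cutSum (dmat x d) S| ≤ ∑ e ∈ (Ex n x).attach, |d e| := by
  rw [cutSum_dmat]
  refine (Finset.abs_sum_le_sum_abs _ _).trans (Finset.sum_le_sum fun e _ => ?_)
  rw [abs_mul]
  have h1 : |cutVec x S e| ≤ 1 := by
    rw [abs_of_nonneg (cutVec_nonneg x S e)]
    exact cutVec_le_one x S e
  nlinarith [abs_nonneg (d e), abs_nonneg (cutVec x S e)]

open Classical in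
lemma span_top (x : Fin n → Fin n → ℝ) (hx : InPSEP n x) (hn : 3 ≤ n)
    (hext : ∀ y z : Fin n → Fin n → ℝ, InPSEP n y → InPSEP n z →
      x ∈ openSegment ℝ y z → y = x ∧ z = x) :
    Submodule.span ℝ {w : Vsp n x | ∃ S, IsTight x S ∧ w = cutVec x S} = ⊤ := by
  obtain ⟨hsymm, hdiag, hdeg, hsub, hbnd⟩ := hx
  have hx' : InPSEP n x := ⟨hsymm, hdiag, hdeg, hsub, hbnd⟩
  by_contra hne
  have hOrthNe : (Submodule.span ℝ {w : Vsp n x | ∃ S, IsTight x S ∧ w = cutVec x S})ᗮ ≠ ⊥ := by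
    intro h
    exact hne (Submodule.orthogonal_eq_bot_iff.mp h)
  obtain ⟨d, hdK, hd0⟩ := Submodule.ne_bot_iff _ |>.mp hOrthNe
  have hOrtho : Ortho x d := by
    intro S hS
    have hmem : cutVec x S ∈ Submodule.span ℝ
        {w : Vsp n x | ∃ S, IsTight x S ∧ w = cutVec x S} :=
      Submodule.subset_span ⟨S, hS, rfl⟩
    have := (Submodule.mem_orthogonal _ _).mp hdK (cutVec x S) hmem
    rw [PiLp.inner_apply] at this
    simp only [RCLike.inner_apply, conj_trivial] at this
    rw [← this, Finset.univ_eq_attach]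
    exact Finset.sum_congr rfl fun _ _ => mul_comm _ _
  -- constants
  set M : ℝ := ∑ e ∈ (Ex n x).attach, |d e| with hM
  have hM0 : 0 ≤ M := Finset.sum_nonneg fun e _ => abs_nonneg _
  set SS : Finset (Finset (Fin n)) := Finset.univ.filter
    (fun S : Finset (Fin n) => 3 ≤ S.card ∧ S.card + 3 ≤ n ∧ cutSum x S ≠ 2) with hSS
  set fracE : Finset (Fin n × Fin n) := (Ex n x).filter (fun e => x e.1 e.2 ≠ 1) with hfracE
  set A : Finset ℝ := insert 1 ((SS.image (fun S => cutSum x S - 2))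
    ∪ fracE.image (fun e => x e.1 e.2) ∪ fracE.image (fun e => 1 - x e.1 e.2)) with hA
  have hAne : A.Nonempty := ⟨1, Finset.mem_insert_self _ _⟩
  set a : ℝ := A.min' hAne with ha
  have hApos : ∀ r ∈ A, 0 < r := by
    intro r hr
    rw [hA] at hr
    rcases Finset.mem_insert.mp hr with rfl | hr2
    · norm_num
    rcases Finset.mem_union.mp hr2 with hr3 | hr4
    · rcases Finset.mem_union.mp hr3 with hr5 | hr6
      · obtain ⟨S, hSmem, rfl⟩ := Finset.mem_image.mp hr5
        rw [hSS] at hSmem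
        simp only [Finset.mem_filter] at hSmem
        have h2 : 2 ≤ cutSum x S := hsub S hSmem.2.1 hSmem.2.2.1
        have hne2 := hSmem.2.2.2
        cases lt_or_eq_of_le h2 with
        | inl h => linarith
        | inr h => exact absurd h.symm hne2
      · obtain ⟨e, hemem, rfl⟩ := Finset.mem_image.mp hr6
        rw [hfracE] at hemem
        simp only [Finset.mem_filter] at hemem
        have h0 := (mem_Ex.mp hemem.1).2
        have h2 := (hbnd e.1 e.2).1
        cases lt_or_eq_of_le h2 with
        | inl h => exact h
        | inr h => exact absurd h.symm h0
    · obtain ⟨e, hemem, rfl⟩ := Finset.mem_image.mp hr4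
      rw [hfracE] at hemem
      simp only [Finset.mem_filter] at hemem
      have h1 := hemem.2
      have h2 := (hbnd e.1 e.2).2
      cases lt_or_eq_of_le h2 with
      | inl h => linarith
      | inr h => exact absurd h h1
  have hapos : 0 < a := hApos a (A.min'_mem hAne)
  set ε : ℝ := a / (M + 1) with hε
  have hεpos : 0 < ε := div_pos hapos (by linarith)
  have hεM : ε * M ≤ a := by
    rw [hε, div_mul_eq_mul_div, div_le_iff₀ (by linarith : (0:ℝ) < M + 1)]
    nlinarith
  -- d vanishes on unit edges
  have hz : ∀ (u v : Fin n) (hmem : (u, v) ∈ Ex n x), x u v = 1 → d ⟨(u, v), hmem⟩ = 0 := by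
    intro u v hmem hone
    exact d_eq_zero_of_unit x hx' hn hOrtho (mem_Ex.mp hmem).1 hmem hone
  -- feasibility of perturbations
  have hfeas : ∀ t : ℝ, |t| ≤ ε → InPSEP n (x + t • dmat x d) := by
    intro t ht
    have htM : ∀ S : Finset (Fin n), |t * cutSum (dmat x d) S| ≤ a := by
      intro S
      rw [abs_mul]
      calc |t| * |cutSum (dmat x d) S| ≤ ε * M :=
            mul_le_mul ht (abs_cutSum_dmat_le x d S) (abs_nonneg _) (le_of_lt hεpos)
        _ ≤ a := hεM
    refine ⟨?_, ?_, ?_, ?_, ?_⟩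
    · intro i j
      simp only [Pi.add_apply, Pi.smul_apply, smul_eq_mul]
      rw [hsymm i j, dmat_symm]
    · intro i
      simp only [Pi.add_apply, Pi.smul_apply, smul_eq_mul]
      rw [hdiag, dmat_diag]; ring
    · intro v
      simp only [Pi.add_apply, Pi.smul_apply, smul_eq_mul]
      rw [Finset.sum_add_distrib]
      have hsplit : ∑ j, dmat x d v j = cutSum (dmat x d) {v} + dmat x d v v := by
        unfold cutSum
        rw [Finset.sum_singleton]
        rw [← Finset.sum_compl_add_sum ({v} : Finset (Fin n)) (dmat x d v)]
        simp
      have hcut0 : cutSum (dmat x d) {v} = 0 := by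
        rw [cutSum_dmat]
        exact hOrtho {v} (tight_singleton x hx' hn v)
      have : ∑ j, t * dmat x d v j = t * ∑ j, dmat x d v j := by
        rw [Finset.mul_sum]
      rw [this, hsplit, hcut0, dmat_diag, hdeg]; ring
    · intro S h3 h3n
      have hgoal : cutSum (x + t • dmat x d) S = cutSum x S + t * cutSum (dmat x d) S :=
        cutSum_add_smul x (dmat x d) t S
      show (2:ℝ) ≤ ∑ i ∈ S, ∑ j ∈ Sᶜ, (x + t • dmat x d) i j
      have : (∑ i ∈ S, ∑ j ∈ Sᶜ, (x + t • dmat x d) i j) = cutSum (x + t • dmat x d) S := rfl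
      rw [this, hgoal]
      by_cases htight : cutSum x S = 2
      · have hTight : IsTight x S := by
          refine ⟨Finset.card_pos.mp (by omega), ne_univ_of_card_lt (by omega), htight⟩
        rw [cutSum_dmat] at hgoal ⊢
        rw [hOrtho S hTight]
        rw [htight]; ring_nf; norm_num [hOrtho S hTight, htight]
      · have hmemA : cutSum x S - 2 ∈ A := by
          rw [hA]
          refine Finset.mem_insert_of_mem (Finset.mem_union_left _ (Finset.mem_union_left _ ?_))
          refine Finset.mem_image.mpr ⟨S, ?_, rfl⟩
          rw [hSS]
          simp only [Finset.mem_filter]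
          exact ⟨Finset.mem_univ _, h3, h3n, htight⟩
        have hale := A.min'_le _ hmemA
        have := htM S
        have habs := abs_le.mp this
        linarith
    · intro i j
      simp only [Pi.add_apply, Pi.smul_apply, smul_eq_mul]
      have key : ∀ u v : Fin n, u < v → 0 ≤ x u v + t * dmat x d u v ∧
          x u v + t * dmat x d u v ≤ 1 := by
        intro u v huv
        by_cases h0 : x u v = 0
        · have hm1 : (u, v) ∉ Ex n x := by
            rw [mem_Ex]; push_neg; intro _; simpa using h0
          have hm2 : (v, u) ∉ Ex n x := by
            rw [mem_Ex]; push_neg; intro h; exact absurd huv (by simpa using le_of_lt h)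
          rw [dmat_apply_zero x d hm1 hm2, h0]
          norm_num
        · have hmem : (u, v) ∈ Ex n x := mem_Ex.mpr ⟨huv, h0⟩
          rw [dmat_apply_mem x d hmem]
          by_cases h1 : x u v = 1
          · rw [hz u v hmem h1, h1]; norm_num
          · have hmemf : (u, v) ∈ fracE := by
              rw [hfracE]; exact Finset.mem_filter.mpr ⟨hmem, h1⟩
            have hA1 : x u v ∈ A := by
              rw [hA]
              exact Finset.mem_insert_of_mem (Finset.mem_union_left _
                (Finset.mem_union_right _ (Finset.mem_image.mpr ⟨(u,v), hmemf, rfl⟩)))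
            have hA2 : 1 - x u v ∈ A := by
              rw [hA]
              exact Finset.mem_insert_of_mem (Finset.mem_union_right _
                (Finset.mem_image.mpr ⟨(u,v), hmemf, rfl⟩))
            have hle1 := A.min'_le _ hA1
            have hle2 := A.min'_le _ hA2
            have hdle : |d ⟨(u, v), hmem⟩| ≤ M := by
              rw [hM]
              exact Finset.single_le_sum (f := fun e => |d e|)
                (fun e _ => abs_nonneg _) (Finset.mem_attach _ _)
            have htd : |t * d ⟨(u, v), hmem⟩| ≤ a := by
              rw [abs_mul]
              calc |t| * |d ⟨(u, v), hmem⟩| ≤ ε * M :=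
                  mul_le_mul ht hdle (abs_nonneg _) (le_of_lt hεpos)
                _ ≤ a := hεM
            have habs := abs_le.mp htd
            constructor <;> linarith
      by_cases hij : i = j
      · subst hij
        rw [hdiag, dmat_diag]; norm_num
      · rcases lt_or_gt_of_ne hij with h | h
        · exact key i j h
        · have := key j i h
          rw [hsymm i j, dmat_symm x d i j]
          exact this
  -- derive contradiction
  have hy : InPSEP n (x + (-ε) • dmat x d) := hfeas (-ε) (by rw [abs_neg, abs_of_pos hεpos])
  have hz' : InPSEP n (x + ε • dmat x d) := hfeas ε (by rw [abs_of_pos hεpos])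
  have hseg : x ∈ openSegment ℝ (x + (-ε) • dmat x d) (x + ε • dmat x d) := by
    refine ⟨1/2, 1/2, by norm_num, by norm_num, by norm_num, ?_⟩
    module
  obtain ⟨h1, _⟩ := hext _ _ hy hz' hseg
  have hdm0 : dmat x d = 0 := by
    have : (-ε) • dmat x d = 0 := by
      have := congrArg (fun y => y - x) h1
      simpa [add_sub_cancel_left] using this
    rcases smul_eq_zero.mp this with h | h
    · exact absurd h (by simp; exact ne_of_gt hεpos)
    · exact h
  apply hd0
  refine PiLp.ext fun e => ?_
  obtain ⟨⟨u, v⟩, he⟩ := e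
  have := dmat_apply_mem x d he
  rw [hdm0] at this
  simp only [Pi.zero_apply] at this
  rw [PiLp.zero_apply]
  exact this.symm

end SEP18

namespace SEP18

section Laminar
variable {α : Type*} [DecidableEq α]

/-- Two sets cross if none of ⊆, ⊇, disjoint holds. -/
def Crossing (A B : Finset α) : Prop := ¬(A ⊆ B ∨ B ⊆ A ∨ Disjoint A B)

/-- A family is laminar if no two members cross. -/
def Laminar (L : Finset (Finset α)) : Prop :=
  ∀ A ∈ L, ∀ B ∈ L, A ⊆ B ∨ B ⊆ A ∨ Disjoint A B

lemma exists_maximal_superset (L : Finset (Finset α)) {T : Finset α} (hT : T ∈ L) :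
    ∃ M ∈ L, T ⊆ M ∧ ∀ T' ∈ L, M ⊆ T' → T' = M := by
  have hne : (L.filter (fun U => T ⊆ U)).Nonempty := ⟨T, Finset.mem_filter.mpr ⟨hT, le_refl T⟩⟩
  obtain ⟨M, hM'⟩ := Finset.exists_maximal hne
  have hM : M ∈ L.filter (fun U => T ⊆ U) := hM'.1
  have hmax : ∀ x ∈ L.filter (fun U => T ⊆ U), ¬M < x :=
    fun y hy hlt => hlt.not_ge (hM'.2 hy hlt.le)
  rw [Finset.mem_filter] at hM
  refine ⟨M, hM.1, hM.2, ?_⟩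
  intro T' hT' hMT'
  by_contra hne'
  exact hmax T' (Finset.mem_filter.mpr ⟨hT', hM.2.trans hMT'⟩)
    (lt_of_le_of_ne hMT' (Ne.symm hne'))

/-- Laminar families of nonempty strict subsets of `G` have at most `2|G| - 2` members. -/
lemma laminar_card_strict : ∀ (m : ℕ) (G : Finset α) (L : Finset (Finset α)), G.card ≤ m →
    (∀ S ∈ L, S.Nonempty ∧ S ⊂ G) → Laminar L → L.card ≤ 2 * G.card - 2 := by
  intro m
  induction m with
  | zero =>
    intro G L hG hmem _
    have : L = ∅ := by
      rw [Finset.eq_empty_iff_forall_notMem]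
      intro S hS
      obtain ⟨hne, hsub⟩ := hmem S hS
      have := Finset.card_lt_card hsub
      omega
    simp [this]
  | succ m ih =>
    intro G L hG hmem hlam
    by_cases hLne : L.Nonempty
    · -- maximal members
      set Mx : Finset (Finset α) := L.filter (fun M => ∀ T' ∈ L, M ⊆ T' → T' = M) with hMx
      have hcover : ∀ T ∈ L, T ∈ Mx ∨ ∃ M ∈ Mx, T ⊂ M := by
        intro T hT
        obtain ⟨M, hM, hTM, hmax⟩ := exists_maximal_superset L hT
        have hMmx : M ∈ Mx := Finset.mem_filter.mpr ⟨hM, hmax⟩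
        by_cases hTM' : T = M
        · left; rwa [hTM']
        · right; exact ⟨M, hMmx, lt_of_le_of_ne hTM hTM'⟩
      have hsubset : L ⊆ Mx ∪ Mx.biUnion (fun M => L.filter (fun T => T ⊂ M)) := by
        intro T hT
        rcases hcover T hT with h | ⟨M, hM, hTM⟩
        · exact Finset.mem_union_left _ h
        · exact Finset.mem_union_right _ (Finset.mem_biUnion.mpr
            ⟨M, hM, Finset.mem_filter.mpr ⟨hT, hTM⟩⟩)
      have hMxdisj : ∀ M ∈ Mx, ∀ M' ∈ Mx, M ≠ M' → Disjoint M M' := by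
        intro M hM M' hM' hne
        have hMl := (Finset.mem_filter.mp hM).1
        have hM'l := (Finset.mem_filter.mp hM').1
        rcases hlam M hMl M' hM'l with h | h | h
        · exact absurd ((Finset.mem_filter.mp hM).2 M' hM'l h) (Ne.symm hne)
        · exact absurd ((Finset.mem_filter.mp hM').2 M hMl h) hne
        · exact h
      -- card of inner families by induction
      have hinner : ∀ M ∈ Mx, (L.filter (fun T => T ⊂ M)).card ≤ 2 * M.card - 2 := by
        intro M hM
        have hMl := (Finset.mem_filter.mp hM).1
        have hMG : M ⊂ G := (hmem M hMl).2
        have hMcard : M.card ≤ m := by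
          have := Finset.card_lt_card hMG
          omega
        refine ih M _ hMcard ?_ ?_
        · intro S hS
          rw [Finset.mem_filter] at hS
          exact ⟨(hmem S hS.1).1, hS.2⟩
        · intro A hA B hB
          rw [Finset.mem_filter] at hA hB
          exact hlam A hA.1 B hB.1
      have hsummx : ∑ M ∈ Mx, M.card ≤ G.card := by
        classical
        have : Mx.biUnion id ⊆ G := by
          intro a ha
          obtain ⟨M, hM, haM⟩ := Finset.mem_biUnion.mp ha
          exact (hmem M (Finset.mem_filter.mp hM).1).2.subset haM
        calc ∑ M ∈ Mx, M.card = ∑ M ∈ Mx, (id M).card := rfl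
          _ = (Mx.biUnion id).card := (Finset.card_biUnion (fun M hM M' hM' h =>
              hMxdisj M hM M' hM' h)).symm
          _ ≤ G.card := Finset.card_le_card this
      have hcard1 : L.card ≤ Mx.card + ∑ M ∈ Mx, (L.filter (fun T => T ⊂ M)).card := by
        calc L.card ≤ (Mx ∪ Mx.biUnion (fun M => L.filter (fun T => T ⊂ M))).card :=
              Finset.card_le_card hsubset
          _ ≤ Mx.card + (Mx.biUnion (fun M => L.filter (fun T => T ⊂ M))).card :=
              Finset.card_union_le _ _
          _ ≤ Mx.card + ∑ M ∈ Mx, (L.filter (fun T => T ⊂ M)).card := by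
              exact Nat.add_le_add_left (Finset.card_biUnion_le) _
      have hMxpos : 1 ≤ Mx.card := by
        obtain ⟨T, hT⟩ := hLne
        rcases hcover T hT with h | ⟨M, hM, _⟩
        · exact Finset.card_pos.mpr ⟨T, h⟩
        · exact Finset.card_pos.mpr ⟨M, hM⟩
      have hMx1 : ∀ M ∈ Mx, 1 ≤ M.card :=
        fun M hM => Finset.card_pos.mpr (hmem M (Finset.mem_filter.mp hM).1).1
      have hsum2 : ∑ M ∈ Mx, (L.filter (fun T => T ⊂ M)).card
          ≤ ∑ M ∈ Mx, (2 * M.card - 2) := Finset.sum_le_sum hinner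
      have hsum3 : ∑ M ∈ Mx, (2 * M.card - 2) + 2 * Mx.card = 2 * ∑ M ∈ Mx, M.card := by
        have : 2 * Mx.card = ∑ _M ∈ Mx, 2 := by
          rw [Finset.sum_const, smul_eq_mul, mul_comm]
        rw [this, ← Finset.sum_add_distrib, Finset.mul_sum]
        refine Finset.sum_congr rfl fun M hM => ?_
        have := hMx1 M hM
        omega
      -- case on Mx.card
      by_cases hk : Mx.card = 1
      · obtain ⟨M, hMeq⟩ := Finset.card_eq_one.mp hk
        have hMmem : M ∈ Mx := by rw [hMeq]; exact Finset.mem_singleton_self M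
        have hMG : M ⊂ G := (hmem M (Finset.mem_filter.mp hMmem).1).2
        have hMlt : M.card < G.card := Finset.card_lt_card hMG
        have h1 := hinner M hMmem
        have h2 : ∑ M' ∈ Mx, (L.filter (fun T => T ⊂ M')).card
            = (L.filter (fun T => T ⊂ M)).card := by rw [hMeq, Finset.sum_singleton]
        have := hMx1 M hMmem
        omega
      · have hk2 : 2 ≤ Mx.card := by omega
        have hG1 : ∑ M ∈ Mx, M.card ≤ G.card := hsummx
        omega
    · rw [Finset.not_nonempty_iff_eq_empty] at hLne
      simp [hLne]

/-- Laminar families of nonempty subsets of `G` have at most `2|G| - 1` members. -/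
lemma laminar_card (G : Finset α) (L : Finset (Finset α))
    (hmem : ∀ S ∈ L, S.Nonempty ∧ S ⊆ G) (hlam : Laminar L) :
    L.card ≤ 2 * G.card - 1 := by
  have hstrict : ∀ S ∈ L.erase G, S.Nonempty ∧ S ⊂ G := by
    intro S hS
    obtain ⟨hne, hmemS⟩ := Finset.mem_erase.mp hS
    exact ⟨(hmem S hmemS).1, lt_of_le_of_ne (hmem S hmemS).2 hne⟩
  have herase := laminar_card_strict G.card G (L.erase G) (le_refl _) hstrict
    (fun A hA B hB => hlam A (Finset.mem_of_mem_erase hA) B (Finset.mem_of_mem_erase hB))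
  by_cases hG : G ∈ L
  · have hGne : G.Nonempty := (hmem G hG).1
    have hGpos : 1 ≤ G.card := Finset.card_pos.mpr hGne
    have : L.card ≤ (L.erase G).card + 1 := by
      have := Finset.card_erase_add_one hG
      omega
    omega
  · have : L.erase G = L := Finset.erase_eq_of_notMem hG
    rw [this] at herase
    omega
end Laminar

end SEP18

namespace SEP18
variable {n : ℕ}

section CrossLemma
variable {α : Type*} [DecidableEq α]

/-- If `M` crosses neither `A` nor `S`, and `A` crosses `S`, then `M` crosses
neither `S ∩ A` nor `S ∪ A`. -/
lemma not_crossing_inter_union {M A S : Finset α}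
    (hMA : M ⊆ A ∨ A ⊆ M ∨ Disjoint M A) (hMS : M ⊆ S ∨ S ⊆ M ∨ Disjoint M S)
    (hAS : Crossing A S) :
    (M ⊆ S ∩ A ∨ S ∩ A ⊆ M ∨ Disjoint M (S ∩ A)) ∧
      (M ⊆ S ∪ A ∨ S ∪ A ⊆ M ∨ Disjoint M (S ∪ A)) := by
  have hAS1 : ¬ A ⊆ S := fun h => hAS (Or.inl h)
  have hAS2 : ¬ S ⊆ A := fun h => hAS (Or.inr (Or.inl h))
  have hAS3 : ¬ Disjoint A S := fun h => hAS (Or.inr (Or.inr h))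
  constructor
  · rcases hMS with h | h | h
    · rcases hMA with h2 | h2 | h2
      · exact Or.inl (Finset.subset_inter h h2)
      · exact absurd ((h2.trans h)) hAS1
      · exact Or.inr (Or.inr (Finset.disjoint_left.mpr
          fun a ha hmem => (Finset.disjoint_left.mp h2) ha (Finset.mem_inter.mp hmem).2))
    · exact Or.inr (Or.inl ((Finset.inter_subset_left).trans h))
    · exact Or.inr (Or.inr (Finset.disjoint_left.mpr
        fun a ha hmem => (Finset.disjoint_left.mp h) ha (Finset.mem_inter.mp hmem).1))
  · rcases hMS with h | h | h
    · exact Or.inl (h.trans Finset.subset_union_left)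
    · rcases hMA with h2 | h2 | h2
      · exact Or.inl (h2.trans Finset.subset_union_right)
      · exact Or.inr (Or.inl (Finset.union_subset h h2))
      · exact absurd (Finset.disjoint_left.mpr fun {c} hcA hcS =>
          (Finset.disjoint_left.mp h2) (h hcS) hcA) hAS3
    · rcases hMA with h2 | h2 | h2
      · exact Or.inl (h2.trans Finset.subset_union_right)
      · exact absurd (Finset.disjoint_left.mpr fun {c} hcA =>
          Finset.disjoint_left.mp h (h2 hcA)) hAS3
      · exact Or.inr (Or.inr (Finset.disjoint_union_right.mpr ⟨h, h2⟩))
end CrossLemma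

open Classical in
/-- Uncrossing identity for cut vectors of tight crossing sets, on the support. -/
lemma cutVec_uncross (x : Fin n → Fin n → ℝ) (hx : InPSEP n x) {S A : Finset (Fin n)}
    (hS : IsTight x S) (hA : IsTight x A)
    (hint : (S ∩ A).Nonempty) (hun : S ∪ A ≠ Finset.univ) :
    cutVec x S + cutVec x A = cutVec x (S ∩ A) + cutVec x (S ∪ A) := by
  obtain ⟨hi, hu, hz1, hz2⟩ := uncross x hx hS hA hint hun
  refine PiLp.ext fun e => ?_
  obtain ⟨⟨a, b⟩, he⟩ := e
  have hab : a < b := (mem_Ex.mp he).1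
  have hxab : x a b ≠ 0 := (mem_Ex.mp he).2
  have hxba : x b a ≠ 0 := by rw [← hx.1 a b]; exact hxab
  simp only [PiLp.add_apply, cutVec, WithLp.ofLp_toLp]
  simp only [Finset.mem_inter, Finset.mem_union]
  have hbad1 : ¬(a ∈ S ∧ a ∉ A ∧ b ∈ A ∧ b ∉ S) := by
    rintro ⟨h1, h2, h3, h4⟩
    exact hxab (hz1 a (Finset.mem_sdiff.mpr ⟨h1, h2⟩) b (Finset.mem_sdiff.mpr ⟨h3, h4⟩))
  have hbad2 : ¬(a ∈ A ∧ a ∉ S ∧ b ∈ S ∧ b ∉ A) := by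
    rintro ⟨h1, h2, h3, h4⟩
    exact hxab (hz2 a (Finset.mem_sdiff.mpr ⟨h1, h2⟩) b (Finset.mem_sdiff.mpr ⟨h3, h4⟩))
  by_cases haS : a ∈ S <;> by_cases haA : a ∈ A <;> by_cases hbS : b ∈ S <;>
    by_cases hbA : b ∈ A <;>
    simp only [haS, haA, hbS, hbA, true_and, false_and, and_true, and_false, not_true,
      not_false_iff, if_true, if_false, or_self, true_or, or_true, false_or, or_false] <;>
    first
      | (exact absurd ⟨‹a ∈ S›, ‹a ∉ A›, ‹b ∈ A›, ‹b ∉ S›⟩ hbad1)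
      | (exact absurd ⟨‹a ∈ A›, ‹a ∉ S›, ‹b ∈ S›, ‹b ∉ A›⟩ hbad2)
      | norm_num
      | ring1

end SEP18

namespace SEP18
variable {n : ℕ}

open Classical in
lemma exists_laminar_spanning (x : Fin n → Fin n → ℝ) (hx : InPSEP n x) (hn : 3 ≤ n) :
    ∃ L : Finset (Finset (Fin n)),
      (∀ S ∈ L, S.Nonempty ∧ S ⊆ Finset.univ.erase (⟨0, by omega⟩ : Fin n)) ∧
      Laminar L ∧
      ∀ S, IsTight x S → cutVec x S ∈
        Submodule.span ℝ ((L.image (cutVec x) : Finset (Vsp n x)) : Set (Vsp n x)) := by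
  set z : Fin n := ⟨0, by omega⟩ with hzdef
  set T2 : Finset (Finset (Fin n)) :=
    Finset.univ.filter (fun S => IsTight x S ∧ z ∉ S) with hT2
  have hmemT2 : ∀ {S}, S ∈ T2 ↔ IsTight x S ∧ z ∉ S := by
    intro S
    rw [hT2, Finset.mem_filter]
    simp
  set C : Finset (Finset (Finset (Fin n))) := T2.powerset.filter Laminar with hC
  have hCne : C.Nonempty := by
    refine ⟨∅, Finset.mem_filter.mpr ⟨Finset.mem_powerset.mpr (Finset.empty_subset _), ?_⟩⟩
    intro A hA
    exact absurd hA (Finset.notMem_empty A)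
  obtain ⟨L, hLC'⟩ := Finset.exists_maximal hCne
  have hLC := hLC'.1
  have hLmax : ∀ y ∈ C, ¬L < y := fun y hy hlt => hlt.not_ge (hLC'.2 hy hlt.le)
  have hLsub : L ⊆ T2 := Finset.mem_powerset.mp (Finset.mem_filter.mp hLC).1
  have hLlam : Laminar L := (Finset.mem_filter.mp hLC).2
  have hmaxmem : ∀ S ∈ T2, (∀ A ∈ L, A ⊆ S ∨ S ⊆ A ∨ Disjoint A S) → S ∈ L := by
    intro S hST2 hnc
    by_contra hSL
    have hL' : insert S L ∈ C := by
      refine Finset.mem_filter.mpr ⟨Finset.mem_powerset.mpr ?_, ?_⟩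
      · intro T hT
        rcases Finset.mem_insert.mp hT with rfl | hT2'
        · exact hST2
        · exact hLsub hT2'
      · intro A hA B hB
        rcases Finset.mem_insert.mp hA with hA' | hA' <;>
          rcases Finset.mem_insert.mp hB with hB' | hB'
        · rw [hA', hB']
          exact Or.inl (le_refl S)
        · rw [hA']
          rcases hnc B hB' with h | h | h
          · exact Or.inr (Or.inl h)
          · exact Or.inl h
          · exact Or.inr (Or.inr h.symm)
        · rw [hB']
          exact hnc A hA'
        · exact hLlam A hA' B hB'
    exact hLmax _ hL' (Finset.ssubset_insert hSL)
  refine ⟨L, ?_, hLlam, ?_⟩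
  · intro S hS
    have h2 := hmemT2.mp (hLsub hS)
    refine ⟨h2.1.1, ?_⟩
    intro a ha
    refine Finset.mem_erase.mpr ⟨?_, Finset.mem_univ a⟩
    intro haz
    rw [haz] at ha
    exact h2.2 ha
  -- main spanning claim for members of T2
  have main : ∀ k : ℕ, ∀ S ∈ T2, (L.filter (fun A => Crossing A S)).card ≤ k →
      cutVec x S ∈ Submodule.span ℝ
        ((L.image (cutVec x) : Finset (Vsp n x)) : Set (Vsp n x)) := by
    intro k
    induction k with
    | zero =>
      intro S hST2 hcN
      have hnc : ∀ A ∈ L, A ⊆ S ∨ S ⊆ A ∨ Disjoint A S := by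
        intro A hA
        by_contra hcr
        have : A ∈ L.filter (fun A => Crossing A S) := Finset.mem_filter.mpr ⟨hA, hcr⟩
        have := Finset.card_pos.mpr ⟨A, this⟩
        omega
      have hSL := hmaxmem S hST2 hnc
      exact Submodule.subset_span (by
        simp only [Finset.coe_image, Set.mem_image, Finset.mem_coe]
        exact ⟨S, hSL, rfl⟩)
    | succ k ih =>
      intro S hST2 hcN
      by_cases hcross : ∃ A ∈ L, Crossing A S
      · obtain ⟨A, hAL, hAS⟩ := hcross
        have hAT2 := hmemT2.mp (hLsub hAL)
        have hST2' := hmemT2.mp hST2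
        have hS := hST2'.1
        have hA := hAT2.1
        have hint : (S ∩ A).Nonempty := by
          have hnd : ¬ Disjoint A S := fun h => hAS (Or.inr (Or.inr h))
          obtain ⟨a, haA, haS⟩ := Finset.not_disjoint_iff.mp hnd
          exact ⟨a, Finset.mem_inter.mpr ⟨haS, haA⟩⟩
        have hun : S ∪ A ≠ Finset.univ := by
          intro h
          have : z ∈ S ∪ A := h ▸ Finset.mem_univ z
          rcases Finset.mem_union.mp this with h' | h'
          · exact hST2'.2 h'
          · exact hAT2.2 h'
        obtain ⟨hti, htu, _, _⟩ := uncross x hx hS hA hint hun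
        have hiT2 : S ∩ A ∈ T2 := hmemT2.mpr ⟨hti, fun h => hST2'.2 (Finset.mem_inter.mp h).1⟩
        have huT2 : S ∪ A ∈ T2 := hmemT2.mpr ⟨htu, fun h => by
          rcases Finset.mem_union.mp h with h' | h'
          · exact hST2'.2 h'
          · exact hAT2.2 h'⟩
        -- crossing numbers decrease
        have hdec : ∀ T : Finset (Fin n),
            (¬ Crossing A T) →
            (∀ M ∈ L, Crossing M T → Crossing M S) →
            (L.filter (fun M => Crossing M T)).card ≤ k := by
          intro T hAT hMT
          have hsub2 : L.filter (fun M => Crossing M T) ⊆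
              (L.filter (fun M => Crossing M S)).erase A := by
            intro M hM
            rw [Finset.mem_filter] at hM
            refine Finset.mem_erase.mpr ⟨?_, Finset.mem_filter.mpr ⟨hM.1, hMT M hM.1 hM.2⟩⟩
            intro hMA
            rw [hMA] at hM
            exact hAT hM.2
          have hAin : A ∈ L.filter (fun M => Crossing M S) := Finset.mem_filter.mpr ⟨hAL, hAS⟩
          have := Finset.card_le_card hsub2
          have := Finset.card_erase_add_one hAin
          omega
        have hk1 : (L.filter (fun M => Crossing M (S ∩ A))).card ≤ k := by
          refine hdec (S ∩ A) (fun hc => hc (Or.inr (Or.inl Finset.inter_subset_right))) ?_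
          intro M hML hMc
          by_contra hMS
          have hMA := hLlam M hML A hAL
          have hMS' : M ⊆ S ∨ S ⊆ M ∨ Disjoint M S := not_not.mp hMS
          exact hMc ((not_crossing_inter_union hMA hMS' hAS).1)
        have hk2 : (L.filter (fun M => Crossing M (S ∪ A))).card ≤ k := by
          refine hdec (S ∪ A) (fun hc => hc (Or.inl Finset.subset_union_right)) ?_
          intro M hML hMc
          by_contra hMS
          have hMA := hLlam M hML A hAL
          have hMS' : M ⊆ S ∨ S ⊆ M ∨ Disjoint M S := not_not.mp hMS
          exact hMc ((not_crossing_inter_union hMA hMS' hAS).2)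
        have hvec : cutVec x S = cutVec x (S ∩ A) + cutVec x (S ∪ A) - cutVec x A := by
          have := cutVec_uncross x hx hS hA hint hun
          rw [← this]; abel
        rw [hvec]
        have hmemA : cutVec x A ∈ Submodule.span ℝ
            ((L.image (cutVec x) : Finset (Vsp n x)) : Set (Vsp n x)) :=
          Submodule.subset_span (by
            simp only [Finset.coe_image, Set.mem_image, Finset.mem_coe]
            exact ⟨A, hAL, rfl⟩)
        exact Submodule.sub_mem _ (Submodule.add_mem _ (ih _ hiT2 hk1) (ih _ huT2 hk2)) hmemA
      · -- no crossing: same as base case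
        have hnc : ∀ A ∈ L, A ⊆ S ∨ S ⊆ A ∨ Disjoint A S := by
          intro A hA
          by_contra hcr
          exact hcross ⟨A, hA, hcr⟩
        have hSL := hmaxmem S hST2 hnc
        exact Submodule.subset_span (by
          simp only [Finset.coe_image, Set.mem_image, Finset.mem_coe]
          exact ⟨S, hSL, rfl⟩)
  -- normalize arbitrary tight sets
  intro S hS
  by_cases hzS : z ∈ S
  · have hScne : Sᶜ.Nonempty := by
      rw [← Finset.card_pos]
      have h1 : S.card < n := by
        have := Finset.card_lt_card (lt_of_le_of_ne (Finset.subset_univ S) hS.2.1)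
        simpa using this
      have := Finset.card_add_card_compl S
      simp only [Finset.card_univ, Fintype.card_fin] at this
      omega
    have hScu : Sᶜ ≠ Finset.univ := by
      intro h
      obtain ⟨s, hs⟩ := hS.1
      have : s ∈ Sᶜ := h ▸ Finset.mem_univ s
      exact (Finset.mem_compl.mp this) hs
    have hSct : IsTight x Sᶜ := ⟨hScne, hScu, by
      rw [cutSum_compl x hx.1]; exact hS.2.2⟩
    have hScT2 : Sᶜ ∈ T2 := hmemT2.mpr ⟨hSct, fun h => (Finset.mem_compl.mp h) hzS⟩
    have := main _ Sᶜ hScT2 (le_refl _)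
    rwa [cutVec_compl] at this
  · exact main _ S (hmemT2.mpr ⟨hS, hzS⟩) (le_refl _)

end SEP18


open Classical in
theorem max_edges_of_vertex_aux (n : ℕ) (hn : 3 ≤ n)
    (x : Fin n → Fin n → ℝ) (hx : IsVertex n x) :
    (SEP18.Ex n x).card ≤ 2 * n - 3 := by
  have hx1 : InPSEP n x := hx.1
  have hext : ∀ y z : Fin n → Fin n → ℝ, InPSEP n y → InPSEP n z →
      x ∈ openSegment ℝ y z → y = x ∧ z = x := fun y z hy hz hseg => (mem_extremePoints.mp hx).2 y hy z hz hseg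
  have htop := SEP18.span_top x hx1 hn hext
  obtain ⟨L, hLprop, hLlam, hLspan⟩ := SEP18.exists_laminar_spanning x hx1 hn
  have hspan2 : Submodule.span ℝ
      ((L.image (SEP18.cutVec x) : Finset (SEP18.Vsp n x)) : Set (SEP18.Vsp n x)) = ⊤ := by
    rw [eq_top_iff, ← htop]
    refine Submodule.span_le.mpr ?_
    rintro w ⟨S, hS, rfl⟩
    exact hLspan S hS
  have hrank1 : Module.finrank ℝ (SEP18.Vsp n x) = Module.finrank ℝ
      (Submodule.span ℝ ((L.image (SEP18.cutVec x) : Finset (SEP18.Vsp n x)) :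
        Set (SEP18.Vsp n x))) := by
    rw [hspan2, finrank_top]
  have hrank2 : Module.finrank ℝ (SEP18.Vsp n x) ≤ (L.image (SEP18.cutVec x)).card := by
    rw [hrank1]
    exact finrank_span_finset_le_card _
  have hcardV : Module.finrank ℝ (SEP18.Vsp n x) = (SEP18.Ex n x).card := by
    rw [show Module.finrank ℝ (SEP18.Vsp n x)
        = Module.finrank ℝ (EuclideanSpace ℝ (SEP18.Ex n x)) from rfl,
      finrank_euclideanSpace, Fintype.card_coe]
  have himg : (L.image (SEP18.cutVec x)).card ≤ L.card := Finset.card_image_le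
  have hLcard := SEP18.laminar_card (Finset.univ.erase (⟨0, by omega⟩ : Fin n)) L hLprop hLlam
  have hG : (Finset.univ.erase (⟨0, by omega⟩ : Fin n)).card = n - 1 := by
    rw [Finset.card_erase_of_mem (Finset.mem_univ _)]
    simp
  rw [hG] at hLcard
  omega

/-- A vertex of `P_SEP(n)` has at most `2n - 3` edges in its
support graph. -/
theorem max_edges_of_vertex (n : ℕ) (hn : 3 ≤ n)
    (x : Fin n → Fin n → ℝ) (hx : IsVertex n x) :
    supportSize n x ≤ 2 * n - 3 :=
  max_edges_of_vertex_aux n hn x hx
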